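/- Let G = (√5+1)/2, T̃_e : [0,1] → [0,1] the unfolded even NICF map (which coincides with the Gauss map x ↦ 1/x - ⌊1/x⌋ on (0,1/2] and satisfies T̃_e(y) = T̃_e(1-y) for y ∈ (1/2,1)), and h̃_e(x) = 1/((G+x) log G). Then the probability measure μ̃_e with density h̃_e is T̃_e-invariant; equivalently, for every y ∈ [0,1], ∑_{k=2}^∞ (h̃_e(1/(y+k)) + h̃_e(1 - 1/(y+k)))·1/(y+k)² = h̃_e(y). -/

import Mathlib

/-!
With `h x = 1 / ((φ + x) log φ)`, the two branches `1 / a` and `1 - 1 / a` of the inverse of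
`T̃_e` at `a = x + 2` satisfy `(h (1 / a) + h (1 - 1 / a)) / a ^ 2 = h x - h (x + 1)`, an identity of
rational functions modulo `φ ^ 2 = φ + 1`. The transfer series at `y` therefore telescopes along
`y, y + 1, y + 2, …`, and its sum is `h y` because `h` decreases to `0` at infinity.
-/

open Filter Topology Real goldenRatio

theorem goldenRatio_transfer_telescope (L : ℝ) {x : ℝ} (hx : 0 < φ + x) :
    (1 / ((φ + 1 / (x + 2)) * L) + 1 / ((φ + (1 - 1 / (x + 2))) * L)) * (1 / (x + 2) ^ 2) =
      1 / ((φ + x) * L) - 1 / ((φ + (x + 1)) * L) := by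
  rcases eq_or_ne L 0 with rfl | hL
  · simp
  have hφ := goldenRatio_sq
  have hφ0 := goldenRatio_pos
  have hφ2 := goldenRatio_lt_two
  generalize φ = g at *
  have ha : 0 < x + 2 := by linarith
  have h1 : g * (x + 2) + 1 ≠ 0 := by nlinarith
  -- `(x + 2) (g + 1) - 1 = g ^ 2 (g + x)` because `g ^ 3 = 2 g + 1`
  have h2 : (x + 2) * (g + 1) - 1 ≠ 0 := by nlinarith
  have h3 : g + (x + 1) ≠ 0 := by linarith
  rw [show g + 1 / (x + 2) = (g * (x + 2) + 1) / (x + 2) by field_simp,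
    show g + (1 - 1 / (x + 2)) = ((g + 1) * (x + 2) - 1) / (x + 2) by field_simp; ring]
  field_simp
  linear_combination (x + 2) * (2 * g + 1 - x ^ 2) * hφ

theorem Antitone.hasSum_sub_succ {f : ℕ → ℝ} (hf : Antitone f) {l : ℝ}
    (hl : Tendsto f atTop (𝓝 l)) : HasSum (fun n ↦ f n - f (n + 1)) (f 0 - l) := by
  rw [hasSum_iff_tendsto_nat_of_nonneg (fun n ↦ sub_nonneg.2 (hf n.le_succ))]
  simp_rw [Finset.sum_range_sub']
  exact hl.const_sub _

theorem transfer_fixed_point (y : ℝ) (hy : y ∈ Set.Icc (0 : ℝ) 1) :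
    let G : ℝ := (Real.sqrt 5 + 1) / 2
    let he : ℝ → ℝ := fun x => 1 / ((G + x) * Real.log G)
    HasSum (fun k : ℕ =>
        (he (1 / (y + (k + 2))) + he (1 - 1 / (y + (k + 2)))) * (1 / (y + (k + 2)) ^ 2))
      (he y) := by
  intro G he
  obtain ⟨hy0, -⟩ := hy
  have hG : G = φ := by simp only [G, goldenRatio, add_comm]
  have hG0 : 0 < G := hG ▸ goldenRatio_pos
  have hL : 0 < log G := hG ▸ log_pos one_lt_goldenRatio
  set f : ℕ → ℝ := fun n ↦ he (y + n)
  have hf_anti : Antitone f := fun m n hmn ↦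
    one_div_le_one_div_of_le (by positivity) (by gcongr)
  have hf_lim : Tendsto f atTop (𝓝 0) :=
    tendsto_const_nhds.div_atTop <| Tendsto.atTop_mul_const hL <|
      tendsto_atTop_add_const_left _ _ <| tendsto_atTop_add_const_left _ _
        tendsto_natCast_atTop_atTop
  have hterm : ∀ k : ℕ, (he (1 / (y + (k + 2))) + he (1 - 1 / (y + (k + 2)))) *
      (1 / (y + (k + 2)) ^ 2) = f k - f (k + 1) := fun k ↦ by
    have := goldenRatio_transfer_telescope (log G) (x := y + k) (by positivity)
    simpa [f, he, hG, add_assoc] using this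
  rw [funext hterm]
  simpa [f] using hf_anti.hasSum_sub_succ hf_lim
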